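/- Suppose G is a W₂ graph: every pair of disjoint independent sets of G is contained in a pair of disjoint maximum independent sets (of size α(G)). If F is an independent set of G with |F| = α(G) − 2, then the complement of G_F = G \ N[F] is not a single edge (i.e., G_F is not a graph on two non-adjacent vertices). -/

import Mathlib

open Finset SimpleGraph
open scoped Classical

noncomputable section

/-- A finset of vertices is independent in `G`. -/
def IsIndep {V : Type*} (G : SimpleGraph V) (s : Finset V) : Prop :=
  ∀ u ∈ s, ∀ v ∈ s, ¬ G.Adj u v

/-- The independence number of a finite graph. -/
def indepNum {V : Type*} [Fintype V] (G : SimpleGraph V) : ℕ :=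
  (Finset.univ.filter fun s : Finset V => IsIndep G s).sup Finset.card

/-- The independence polynomial of a finite graph, evaluated at `x`. -/
def indepPoly {V : Type*} [Fintype V] (G : SimpleGraph V) (x : ℚ) : ℚ :=
  ∑ s ∈ Finset.univ.filter (fun s : Finset V => IsIndep G s), x ^ s.card

/-- The cycle graph on `ZMod n`. -/
def cycleG (n : ℕ) : SimpleGraph (ZMod n) :=
  SimpleGraph.fromRel (fun u v => u - v = 1)

/-- The closed neighborhood of a finset of vertices. -/
def closedNbhdF {V : Type*} (G : SimpleGraph V) (F : Finset V) : Set V :=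
  ↑F ∪ {v | ∃ u ∈ F, G.Adj u v}

/-- `G` is a W₂ graph. -/
def IsW2 {V : Type*} [Fintype V] (G : SimpleGraph V) : Prop :=
  2 ≤ Fintype.card V ∧
  ∀ A B : Finset V, IsIndep G A → IsIndep G B → Disjoint A B →
    ∃ A₀ B₀ : Finset V, IsIndep G A₀ ∧ IsIndep G B₀ ∧ A ⊆ A₀ ∧ B ⊆ B₀ ∧
      Disjoint A₀ B₀ ∧ A₀.card = _root_.indepNum G ∧ B₀.card = _root_.indepNum G

/-- A maximal independent set. -/
def IsMaxIndep {V : Type*} (G : SimpleGraph V) (s : Finset V) : Prop :=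
  IsIndep G s ∧ ∀ v ∉ s, ¬ IsIndep G (insert v s)

/-- `G` is well-covered: all maximal independent sets have size `indepNum G`. -/
def WellCovered {V : Type*} [Fintype V] (G : SimpleGraph V) : Prop :=
  ∀ s : Finset V, IsMaxIndep G s → s.card = _root_.indepNum G

/-!
Extend `F ∪ {a}` and `{b}` to disjoint maximum independent sets `A₀ ∋ a` and `B₀ ∋ b`.
Since `|F ∪ {a}| = α(G) - 1`, the set `A₀` contains a further vertex `x`; it lies outside
`N[F]` because `A₀ ⊇ F` is independent, so `x ∈ {a, b}`. But `x ≠ a`, and `x ≠ b` because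
`b ∈ B₀`, which is disjoint from `A₀`.
-/

section

variable {V : Type*} {G : SimpleGraph V}

lemma IsIndep.mono {s t : Finset V} (ht : IsIndep G t) (hst : s ⊆ t) : IsIndep G s :=
  fun u hu v hv => ht u (hst hu) v (hst hv)

lemma isIndep_pair {a b : V} (h : ¬ G.Adj a b) : IsIndep G {a, b} := by
  intro u hu v hv
  simp only [mem_insert, mem_singleton] at hu hv
  rcases hu with rfl | rfl <;> rcases hv with rfl | rfl
  exacts [G.irrefl, h, fun h' => h h'.symm, G.irrefl]

lemma IsIndep.insert_of_notMem_closedNbhdF {F : Finset V} {a : V} (hF : IsIndep G F)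
    (ha : a ∉ closedNbhdF G F) : IsIndep G (insert a F) := by
  have haF : ∀ u ∈ F, ¬ G.Adj u a := fun u hu h => ha (Or.inr ⟨u, hu, h⟩)
  intro u hu v hv
  rcases mem_insert.1 hu with rfl | huF <;> rcases mem_insert.1 hv with rfl | hvF
  exacts [G.irrefl, fun h => haF v hvF h.symm, haF u huF, hF u huF v hvF]

lemma IsIndep.notMem_closedNbhdF {s F : Finset V} {x : V} (hs : IsIndep G s) (hFs : F ⊆ s)
    (hx : x ∈ s) (hxF : x ∉ F) : x ∉ closedNbhdF G F := by
  rintro (hx' | ⟨u, hu, hadj⟩)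
  exacts [hxF hx', hs u (hFs hu) x hx hadj]

lemma IsIndep.card_le_indepNum [Fintype V] {s : Finset V} (hs : IsIndep G s) :
    s.card ≤ _root_.indepNum G :=
  le_sup (f := Finset.card) (by simpa using hs)

lemma IsW2.exists_insert_isIndep_ne [Fintype V] (hG : IsW2 G) {S : Finset V} {b : V}
    (hS : IsIndep G S) (hcard : S.card < _root_.indepNum G) (hb : b ∉ S) :
    ∃ x ∉ S, x ≠ b ∧ IsIndep G (insert x S) := by
  have hdisj : Disjoint S {b} := disjoint_singleton_right.2 hb
  obtain ⟨A₀, B₀, hA₀, -, hSA, hbB, hAB, hcardA, -⟩ :=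
    hG.2 S {b} hS (by simp [IsIndep]) hdisj
  obtain ⟨x, hxA, hxS⟩ := exists_of_ssubset (hSA.ssubset_of_ne (by rintro rfl; omega))
  refine ⟨x, hxS, ?_, hA₀.mono (insert_subset hxA hSA)⟩
  rintro rfl
  exact disjoint_left.1 hAB hxA (hbB (mem_singleton_self x))

end

/-- if `G` is W₂ and `F` is an independent set with `|F| = α(G) - 2`, then
`G_F = G \ N[F]` is not a graph on two non-adjacent vertices (its complement is not a
single edge). -/
theorem stmt_6 {V : Type*} [Fintype V] (G : SimpleGraph V) (hW2 : IsW2 G)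
    (F : Finset V) (hF : IsIndep G F) (hcard : F.card = _root_.indepNum G - 2) :
    ¬ ∃ a b : V, a ≠ b ∧ ¬ G.Adj a b ∧
      {v : V | v ∉ closedNbhdF G F} = {a, b} := by
  rintro ⟨a, b, hab, hnadj, hset⟩
  have hG_F : ∀ v, v ∉ closedNbhdF G F ↔ v = a ∨ v = b := fun v => Set.ext_iff.1 hset v
  have ha := (hG_F a).2 (Or.inl rfl)
  have hb := (hG_F b).2 (Or.inr rfl)
  -- `hcard` uses truncated subtraction, so `|F ∪ {a}| = α(G) - 1` needs `α(G) ≥ 2`.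
  have hα : 2 ≤ _root_.indepNum G := by
    simpa [card_pair hab] using (isIndep_pair hnadj).card_le_indepNum
  have hbS : b ∉ insert a F := by
    simpa [Ne.symm hab] using fun hbF => hb (Or.inl hbF)
  have hcardS : (insert a F).card < _root_.indepNum G := by
    rw [card_insert_of_notMem fun haF => ha (Or.inl haF)]
    omega
  obtain ⟨x, hxS, hxb, hind⟩ :=
    hW2.exists_insert_isIndep_ne (hF.insert_of_notMem_closedNbhdF ha) hcardS hbS
  have hx := hind.notMem_closedNbhdF ((subset_insert a F).trans (subset_insert x _))
    (mem_insert_self x _) (fun hxF => hxS (mem_insert_of_mem hxF))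
  rcases (hG_F x).1 hx with rfl | rfl
  exacts [hxS (mem_insert_self x F), hxb rfl]
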